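/- arXiv:1310.7514 — 2 statements merged into one kernel-verified Lean document; each statement's English description precedes it below -/
import Mathlib

section
/- Let V be a maximal isotropic ZMod 2-subspace of (Fin p → ZMod 2) × (Fin p → ZMod 2) with respect to ω. Then the joint +1 eigenspace { ψ : (Fin p → ZMod 2) → ℂ | ∀ (a,b) ∈ V, σ(a,b).mulVec ψ = ψ } is a ℂ-subspace of dimension at most 1; that is, a stabilizer state determined by a Cartanion is unique up to scalar when it exists. -/
open Matrix BigOperators

/-- The mod-2 dot product of two bitstrings. -/
def dotp {p : ℕ} (a b : Fin p → ZMod 2) : ZMod 2 := ∑ i, a i * b i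

/-- The sign `(-1)^t` for `t : ZMod 2`. -/
noncomputable def sgn (t : ZMod 2) : ℂ := (-1 : ℂ) ^ t.val

/-- The Pauli spinor matrix `σ(a,b)`, representing `⊗ᵢ X^(a i) Z^(b i)`:
`σ(a,b) x y = (-1)^(b⬝x)` if `y = x + a` and `0` otherwise. -/
noncomputable def pauli {p : ℕ} (a b : Fin p → ZMod 2) :
    Matrix (Fin p → ZMod 2) (Fin p → ZMod 2) ℂ :=
  fun x y => if y = x + a then sgn (dotp b x) else 0

/-- The symplectic form `ω((a,b),(c,d)) = a⬝d + b⬝c` on pairs of bitstrings. -/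
def omegaF {p : ℕ} (u v : (Fin p → ZMod 2) × (Fin p → ZMod 2)) : ZMod 2 :=
  dotp u.1 v.2 + dotp u.2 v.1

/-- A subspace is isotropic if `ω` vanishes on all pairs of its elements. -/
def IsIsotropic {p : ℕ}
    (V : Submodule (ZMod 2) ((Fin p → ZMod 2) × (Fin p → ZMod 2))) : Prop :=
  ∀ u ∈ V, ∀ v ∈ V, omegaF u v = 0

/-- A maximal isotropic subspace: isotropic and not properly contained in any
isotropic subspace. -/
def IsMaxIsotropic {p : ℕ}
    (V : Submodule (ZMod 2) ((Fin p → ZMod 2) × (Fin p → ZMod 2))) : Prop :=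
  IsIsotropic V ∧ ∀ W, IsIsotropic W → V ≤ W → W = V

/-- The joint `+1` eigenspace of the spinors `σ(a,b)` for `(a,b) ∈ V`, as a
`ℂ`-subspace of `ℂ^(2^p)`. -/
noncomputable def stabSpace {p : ℕ}
    (V : Submodule (ZMod 2) ((Fin p → ZMod 2) × (Fin p → ZMod 2))) :
    Submodule ℂ ((Fin p → ZMod 2) → ℂ) where
  carrier := {ψ | ∀ u ∈ V, (pauli u.1 u.2).mulVec ψ = ψ}
  add_mem' := by
    intro ψ φ hψ hφ u hu
    rw [Matrix.mulVec_add, hψ u hu, hφ u hu]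
  zero_mem' := by
    intro u hu
    rw [Matrix.mulVec_zero]
  smul_mem' := by
    intro c ψ hψ u hu
    rw [Matrix.mulVec_smul, hψ u hu]


/-!
A vector `ψ` fixed by every `σ(a,b)`, `(a,b) ∈ V`, is determined by `ψ 0`. Given `x`, either some
`(0,b) ∈ V` has `b⬝x = 1`, and then `σ(0,b)ψ = ψ` forces `ψ x = -ψ x = 0`; or `x` is orthogonal to
all such `b`, and then maximality of `V` provides some `(x,c) ∈ V`, whose action gives
`ψ x = ψ 0`. Hence evaluation at `0` is injective on the joint `+1` eigenspace.
-/

theorem dotp_eq_dotProduct {p : ℕ} (a b : Fin p → ZMod 2) : dotp a b = a ⬝ᵥ b := rfl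

theorem Submodule.exists_dotProduct_fst_eq_dotProduct_snd {K ι : Type*} [Field K] [Fintype ι]
    (V : Submodule K ((ι → K) × (ι → K))) (x : ι → K)
    (hx : ∀ b, ((0 : ι → K), b) ∈ V → x ⬝ᵥ b = 0) :
    ∃ c : ι → K, ∀ v ∈ V, c ⬝ᵥ v.1 = x ⬝ᵥ v.2 := by
  classical
  let coord (i : ι) : V →ₗ[K] K := LinearMap.proj i ∘ₗ LinearMap.fst K _ _ ∘ₗ V.subtype
  let form : V →ₗ[K] K := dotProductEquiv K ι x ∘ₗ LinearMap.snd K _ _ ∘ₗ V.subtype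
  have hker : ⨅ i, LinearMap.ker (coord i) ≤ LinearMap.ker form := by
    intro v hv
    have hfst : (v : (ι → K) × (ι → K)).1 = 0 :=
      funext fun i => (Submodule.mem_iInf _).1 hv i
    have hmem : ((0 : ι → K), (v : (ι → K) × (ι → K)).2) ∈ V := hfst ▸ v.2
    exact hx _ hmem
  obtain ⟨c, hc⟩ :=
    (Submodule.mem_span_range_iff_exists_fun K).1 (mem_span_of_iInf_ker_le_ker hker)
  refine ⟨c, fun v hv => ?_⟩
  simpa [coord, form, dotProduct] using LinearMap.congr_fun hc ⟨v, hv⟩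

theorem omegaF_comm {p : ℕ} (u v : (Fin p → ZMod 2) × (Fin p → ZMod 2)) :
    omegaF u v = omegaF v u := by
  simp only [omegaF, dotp_eq_dotProduct, dotProduct_comm u.1, dotProduct_comm u.2, add_comm]

theorem omegaF_self {p : ℕ} (u : (Fin p → ZMod 2) × (Fin p → ZMod 2)) : omegaF u u = 0 := by
  rw [omegaF, dotp_eq_dotProduct, dotp_eq_dotProduct, dotProduct_comm u.2, ZModModule.add_self]

theorem omegaF_add_left {p : ℕ} (u v w : (Fin p → ZMod 2) × (Fin p → ZMod 2)) :
    omegaF (u + v) w = omegaF u w + omegaF v w := by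
  simp only [omegaF, dotp_eq_dotProduct, Prod.fst_add, Prod.snd_add, add_dotProduct]
  ring

theorem omegaF_smul_left {p : ℕ} (t : ZMod 2) (u v : (Fin p → ZMod 2) × (Fin p → ZMod 2)) :
    omegaF (t • u) v = t * omegaF u v := by
  simp only [omegaF, dotp_eq_dotProduct, Prod.smul_fst, Prod.smul_snd, smul_dotProduct,
    smul_eq_mul, mul_add]

theorem omegaF_add_right {p : ℕ} (u v w : (Fin p → ZMod 2) × (Fin p → ZMod 2)) :
    omegaF u (v + w) = omegaF u v + omegaF u w := by
  rw [omegaF_comm, omegaF_add_left, omegaF_comm v, omegaF_comm w]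

theorem omegaF_smul_right {p : ℕ} (t : ZMod 2) (u v : (Fin p → ZMod 2) × (Fin p → ZMod 2)) :
    omegaF u (t • v) = t * omegaF u v := by
  rw [omegaF_comm, omegaF_smul_left, omegaF_comm]

theorem IsMaxIsotropic.mem_of_forall_omegaF_eq_zero {p : ℕ}
    {V : Submodule (ZMod 2) ((Fin p → ZMod 2) × (Fin p → ZMod 2))} (hV : IsMaxIsotropic V)
    {w : (Fin p → ZMod 2) × (Fin p → ZMod 2)} (hw : ∀ v ∈ V, omegaF v w = 0) : w ∈ V := by
  have hW : IsIsotropic (V ⊔ Submodule.span (ZMod 2) {w}) := by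
    intro u hu u' hu'
    obtain ⟨v, hv, _, ht, rfl⟩ := Submodule.mem_sup.1 hu
    obtain ⟨v', hv', _, hs, rfl⟩ := Submodule.mem_sup.1 hu'
    obtain ⟨t, rfl⟩ := Submodule.mem_span_singleton.1 ht
    obtain ⟨s, rfl⟩ := Submodule.mem_span_singleton.1 hs
    simp only [omegaF_add_left, omegaF_add_right, omegaF_smul_left, omegaF_smul_right,
      hV.1 v hv v' hv', hw v hv, omegaF_comm w v', hw v' hv', omegaF_self]
    ring
  rw [← hV.2 _ hW le_sup_left]
  exact Submodule.mem_sup_right (Submodule.mem_span_singleton_self w)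

theorem IsMaxIsotropic.exists_mem_of_forall_dotp_eq_zero {p : ℕ}
    {V : Submodule (ZMod 2) ((Fin p → ZMod 2) × (Fin p → ZMod 2))} (hV : IsMaxIsotropic V)
    {x : Fin p → ZMod 2} (hx : ∀ b, ((0 : Fin p → ZMod 2), b) ∈ V → dotp b x = 0) :
    ∃ c, (x, c) ∈ V := by
  obtain ⟨c, hc⟩ := V.exists_dotProduct_fst_eq_dotProduct_snd x fun b hb => by
    rw [dotProduct_comm]; exact hx b hb
  refine ⟨c, hV.mem_of_forall_omegaF_eq_zero fun v hv => ?_⟩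
  rw [omegaF, dotp_eq_dotProduct, dotp_eq_dotProduct, dotProduct_comm, hc v hv,
    dotProduct_comm, ZModModule.add_self]

theorem sgn_zero : sgn 0 = 1 := by simp [sgn]

theorem sgn_one : sgn 1 = -1 := by simp [sgn, ZMod.val_one]

theorem pauli_mulVec_apply {p : ℕ} (a b : Fin p → ZMod 2) (ψ : (Fin p → ZMod 2) → ℂ)
    (x : Fin p → ZMod 2) : (pauli a b *ᵥ ψ) x = sgn (dotp b x) * ψ (x + a) := by
  simp [mulVec, dotProduct, pauli, ite_mul, Finset.sum_ite_eq']

theorem sgn_mul_apply_add_of_mem_stabSpace {p : ℕ}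
    {V : Submodule (ZMod 2) ((Fin p → ZMod 2) × (Fin p → ZMod 2))}
    {ψ : (Fin p → ZMod 2) → ℂ} (hψ : ψ ∈ stabSpace V) {a b : Fin p → ZMod 2} (hab : (a, b) ∈ V)
    (x : Fin p → ZMod 2) : sgn (dotp b x) * ψ (x + a) = ψ x := by
  rw [← pauli_mulVec_apply, hψ (a, b) hab]

theorem eq_zero_of_mem_stabSpace_of_apply_zero {p : ℕ}
    {V : Submodule (ZMod 2) ((Fin p → ZMod 2) × (Fin p → ZMod 2))} (hV : IsMaxIsotropic V)
    {ψ : (Fin p → ZMod 2) → ℂ} (hψ : ψ ∈ stabSpace V) (h0 : ψ 0 = 0) : ψ = 0 := by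
  funext x
  by_cases hx : ∀ b, ((0 : Fin p → ZMod 2), b) ∈ V → dotp b x = 0
  · obtain ⟨c, hc⟩ := hV.exists_mem_of_forall_dotp_eq_zero hx
    have h := sgn_mul_apply_add_of_mem_stabSpace hψ hc 0
    rwa [dotp_eq_dotProduct, dotProduct_zero, sgn_zero, one_mul, zero_add, h0] at h
  · push Not at hx
    obtain ⟨b, hb, hbx⟩ := hx
    have h := sgn_mul_apply_add_of_mem_stabSpace hψ hb x
    have hbx1 : dotp b x = 1 := (by decide : ∀ t : ZMod 2, t ≠ 0 → t = 1) _ hbx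
    rw [hbx1, add_zero, sgn_one, neg_one_mul, neg_eq_iff_add_eq_zero] at h
    exact add_self_eq_zero.1 h

theorem stabSpace_rank_le_one_general {p : ℕ}
    (V : Submodule (ZMod 2) ((Fin p → ZMod 2) × (Fin p → ZMod 2)))
    (hV : IsMaxIsotropic V) :
    Module.rank ℂ (stabSpace V) ≤ 1 := by
  let eval₀ : stabSpace V →ₗ[ℂ] ℂ := LinearMap.proj 0 ∘ₗ (stabSpace V).subtype
  have hinj : Function.Injective eval₀ := by
    rw [← LinearMap.ker_eq_bot, LinearMap.ker_eq_bot']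
    exact fun ψ h0 => Subtype.ext (eq_zero_of_mem_stabSpace_of_apply_zero hV ψ.2 h0)
  calc Module.rank ℂ (stabSpace V) ≤ Module.rank ℂ ℂ := eval₀.rank_le_of_injective hinj
    _ = 1 := Module.rank_self ℂ

/-- For a maximal isotropic subspace `V`, the joint `+1` eigenspace
`{ψ | ∀ (a,b) ∈ V, σ(a,b).mulVec ψ = ψ}` has dimension at most 1: a stabilizer state
determined by a Cartanion is unique up to scalar when it exists. -/
theorem stabSpace_rank_le_one {p : ℕ} (hp : 1 ≤ p)
    (V : Submodule (ZMod 2) ((Fin p → ZMod 2) × (Fin p → ZMod 2)))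
    (hV : IsMaxIsotropic V) :
    Module.rank ℂ (stabSpace V) ≤ 1 :=
  stabSpace_rank_le_one_general V hV
end

section
/- Let V be a maximal isotropic subspace with respect to ω, let ψ₀ be a stabilizer state for V, and let ψ_j = σ(c,d).mulVec ψ₀ be a basis codeword obtained by applying the codeword spinor σ(c,d). Then for every (a,b) ∈ V, ψ_j is an eigenvector of σ(a,b): σ(a,b).mulVec ψ_j = (-1)^(ω((a,b),(c,d))) • ψ_j, with eigenvalue ±1. (Paper's Lemma 5: each basis codeword is an eigenvector of every spinor in the Cartanion with eigenvalue (-1)^ε.) -/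
open Matrix BigOperators

/-! By the multiplication law `σ(a,b) σ(c,d) = (-1)^(a⬝d) σ(a+c,b+d)`, the spinors `σ(u)` and
`σ(c,d)` commute up to the sign `(-1)^ω(u,(c,d))`. Since `σ(u)` fixes `ψ₀`,
`σ(u) σ(c,d) ψ₀ = (-1)^ω(u,(c,d)) σ(c,d) σ(u) ψ₀ = (-1)^ω(u,(c,d)) σ(c,d) ψ₀`. -/

lemma sgn_add (s t : ZMod 2) : sgn (s + t) = sgn s * sgn t := by
  rw [sgn, sgn, sgn, ZMod.val_add, ← pow_add, ← neg_one_pow_eq_pow_mod_two]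

lemma sgn_mul_self (t : ZMod 2) : sgn t * sgn t = 1 := by
  rw [← sgn_add, CharTwo.add_self_eq_zero, sgn, ZMod.val_zero, pow_zero]

lemma dotp_comm {p : ℕ} (a b : Fin p → ZMod 2) : dotp a b = dotp b a := by
  simp only [dotp, mul_comm]

lemma dotp_add_right {p : ℕ} (b x y : Fin p → ZMod 2) :
    dotp b (x + y) = dotp b x + dotp b y := by
  simp only [dotp, Pi.add_apply, mul_add, Finset.sum_add_distrib]

lemma dotp_add_left {p : ℕ} (x y b : Fin p → ZMod 2) :
    dotp (x + y) b = dotp x b + dotp y b := by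
  simp only [dotp, Pi.add_apply, add_mul, Finset.sum_add_distrib]

lemma pauli_mul_pauli {p : ℕ} (a b c d : Fin p → ZMod 2) :
    pauli a b * pauli c d = sgn (dotp a d) • pauli (a + c) (b + d) := by
  ext x y
  rw [Matrix.mul_apply, Finset.sum_eq_single (x + a)]
  · simp only [pauli, if_true, Matrix.smul_apply, smul_eq_mul, add_assoc, dotp_add_right,
      dotp_add_left, sgn_add, dotp_comm d a]
    split_ifs <;> ring
  · intro z _ hz
    simp only [pauli, if_neg hz, zero_mul]
  · simp

lemma pauli_mul_pauli_comm {p : ℕ} (a b c d : Fin p → ZMod 2) :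
    pauli a b * pauli c d = sgn (omegaF (a, b) (c, d)) • (pauli c d * pauli a b) := by
  have hsign : sgn (dotp a d) = sgn (omegaF (a, b) (c, d)) * sgn (dotp c b) := by
    rw [omegaF, sgn_add, dotp_comm b c, mul_assoc, sgn_mul_self, mul_one]
  rw [pauli_mul_pauli, pauli_mul_pauli, hsign, smul_smul, add_comm a, add_comm b]

theorem codeword_eigenvector_general {p : ℕ}
    (V : Submodule (ZMod 2) ((Fin p → ZMod 2) × (Fin p → ZMod 2)))
    (ψ₀ : (Fin p → ZMod 2) → ℂ)
    (hstab : ∀ u ∈ V, (pauli u.1 u.2).mulVec ψ₀ = ψ₀)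
    (c d : Fin p → ZMod 2) :
    ∀ u ∈ V,
      (pauli u.1 u.2).mulVec ((pauli c d).mulVec ψ₀) =
        sgn (omegaF u (c, d)) • (pauli c d).mulVec ψ₀ := by
  intro u hu
  rw [mulVec_mulVec, pauli_mul_pauli_comm, smul_mulVec, ← mulVec_mulVec, hstab u hu]

/-- Paper's Lemma 5: For a stabilizer state `ψ₀` of a maximal isotropic
subspace `V` and a basis codeword `ψ_j = σ(c,d).mulVec ψ₀`, each `(a,b) ∈ V` has `ψ_j`
as an eigenvector: `σ(a,b).mulVec ψ_j = (-1)^(ω((a,b),(c,d))) • ψ_j`, eigenvalue `±1`. -/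
theorem codeword_eigenvector {p : ℕ} (hp : 1 ≤ p)
    (V : Submodule (ZMod 2) ((Fin p → ZMod 2) × (Fin p → ZMod 2)))
    (hV : IsMaxIsotropic V) (ψ₀ : (Fin p → ZMod 2) → ℂ) (hψ₀ : ψ₀ ≠ 0)
    (hstab : ∀ u ∈ V, (pauli u.1 u.2).mulVec ψ₀ = ψ₀)
    (c d : Fin p → ZMod 2) :
    ∀ u ∈ V,
      (pauli u.1 u.2).mulVec ((pauli c d).mulVec ψ₀) =
        sgn (omegaF u (c, d)) • (pauli c d).mulVec ψ₀ :=
  codeword_eigenvector_general V ψ₀ hstab c d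
end
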